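/- arXiv:math/0009182 — 2 statements merged into one kernel-verified Lean document; each statement's English description precedes it below -/
import Mathlib

section
/- Let q be a prime power and n ≥ 0. For any conjugacy class C of GL(n+1, F_q), let f denote the dimension over F_q of the fixed space ker(β − I) ⊆ F_q^{n+1} of any element β of C (this dimension is the same for all β in C). Then the number of elements of the affine group A(n,q) that lie in C equals |A(n,q)| · (q^f − 1) · |C| / |GL(n+1,q)|. -/
open Matrix

/-- Membership in the affine group `A(n,q)`: invertible `(n+1) × (n+1)` matrices with
`x_{11} = 1` and `x_{j1} = 0` for `j ≥ 2` (indices starting at `0` in Lean). -/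
def IsAff {F : Type} [Field F] {n : ℕ} (x : GL (Fin (n + 1)) F) : Prop :=
  x.val 0 0 = 1 ∧ ∀ j : Fin (n + 1), j ≠ 0 → x.val j 0 = 0

/-! Count `N = #{g ∈ GL(n+1,q) | g β g⁻¹ ∈ A(n,q)}` in two ways. The fibres of
`g ↦ g β g⁻¹` are cosets of the centralizer `Z(β)`, so `N = |A ∩ C| |Z(β)|`, and likewise
`|GL(n+1,q)| = |C| |Z(β)|`. On the other hand `A(n,q)` is the stabilizer of `e₀` for the
action of `GL(n+1,q)` on `F_q^{n+1}`, whose orbit is the set of nonzero vectors, and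
`g β g⁻¹ ∈ A(n,q)` iff `β` fixes `g⁻¹ e₀`; orbit-stabilizer then gives
`N = |A(n,q)| · #{v ≠ 0 | β v = v} = |A(n,q)| (q^f - 1)`. -/

open MulAction

theorem MulAction.natCard_smul_preimage {G X : Type*} [Group G] [MulAction G X] (b : X)
    (P : X → Prop) :
    Nat.card {g : G // P (g • b)} =
      Nat.card {x // x ∈ orbit G b ∧ P x} * Nat.card (stabilizer G b) := by
  rw [← Nat.card_prod]
  exact Nat.card_congr <|
    ((orbitProdStabilizerEquivGroup G b).symm.subtypeEquiv fun _ => Iff.rfl).trans <|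
      Equiv.prodSubtypeFstEquivSubtypeProd.trans <|
        (Equiv.subtypeSubtypeEquivSubtypeInter _ _).prodCongr (Equiv.refl _)

theorem natCard_conj_preimage {G : Type*} [Group G] (b : G) (P : G → Prop) :
    Nat.card {g : G // P (g * b * g⁻¹)} =
      Nat.card {x // P x ∧ IsConj b x} * Nat.card (stabilizer (ConjAct G) b) :=
  calc Nat.card {g : G // P (g * b * g⁻¹)}
      _ = Nat.card {g : ConjAct G // P (g • b)} :=
        Nat.card_congr (ConjAct.ofConjAct.toEquiv.symm.subtypeEquiv fun _ => Iff.rfl)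
      _ = Nat.card {x // x ∈ orbit (ConjAct G) b ∧ P x} * Nat.card (stabilizer (ConjAct G) b) :=
        natCard_smul_preimage b P
      _ = _ := by
        congr 1
        exact Nat.card_congr <| Equiv.subtypeEquivRight fun x => by
          rw [ConjAct.mem_orbit_conjAct, isConj_comm, and_comm]

theorem LinearEquiv.exists_apply_eq_of_ne_zero {K V : Type*} [DivisionRing K] [AddCommGroup V]
    [Module K V] {v w : V} (hv : v ≠ 0) (hw : w ≠ 0) : ∃ g : V ≃ₗ[K] V, g v = w := by
  obtain ⟨g, hg⟩ := Submodule.exists_linearEquiv_restrict_eq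
    ((LinearEquiv.toSpanNonzeroSingleton K V v hv).symm ≪≫ₗ
      LinearEquiv.toSpanNonzeroSingleton K V w hw)
  have hcoord : (LinearEquiv.toSpanNonzeroSingleton K V v hv).symm
      ⟨v, Submodule.mem_span_singleton_self v⟩ = 1 := LinearEquiv.coord_self K V v hv
  exact ⟨g, by simpa [hcoord] using (hg ⟨v, Submodule.mem_span_singleton_self v⟩).symm⟩

section GeneralLinear

variable {K ι : Type*} [Field K] [Fintype ι] [DecidableEq ι]

theorem Matrix.GeneralLinearGroup.exists_smul_eq {v w : ι → K} (hv : v ≠ 0) (hw : w ≠ 0) :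
    ∃ g : GL ι K, g • v = w := by
  obtain ⟨g, hg⟩ := LinearEquiv.exists_apply_eq_of_ne_zero (K := K) hv hw
  refine ⟨toLin.symm (LinearMap.GeneralLinearGroup.ofLinearEquiv g), ?_⟩
  rw [← hg, Units.smul_def, smul_eq_mulVec, ← mulVecLin_apply, ← toLin_apply,
    MulEquiv.apply_symm_apply]
  rfl

theorem Matrix.GeneralLinearGroup.orbit_eq_setOf_ne_zero {v : ι → K} (hv : v ≠ 0) :
    orbit (GL ι K) v = {w | w ≠ 0} := by
  ext w
  refine ⟨?_, fun hw => exists_smul_eq hv hw⟩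
  rintro ⟨g, rfl⟩
  exact (smul_ne_zero_iff_ne g).mpr hv

theorem Matrix.GeneralLinearGroup.mem_ker_toLin'_sub_one_iff (β : GL ι K) (v : ι → K) :
    v ∈ LinearMap.ker (Matrix.toLin' (β.val - 1)) ↔ β • v = v := by
  rw [LinearMap.mem_ker, Matrix.toLin'_apply, sub_mulVec, one_mulVec, sub_eq_zero,
    Units.smul_def, smul_eq_mulVec]

theorem Matrix.GeneralLinearGroup.natCard_nonzero_fixed [Finite K] (β : GL ι K) :
    Nat.card {v : ι → K // v ≠ 0 ∧ β • v = v} =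
      Nat.card K ^ Module.finrank K (LinearMap.ker (Matrix.toLin' (β.val - 1))) - 1 := by
  set W := LinearMap.ker (Matrix.toLin' (β.val - 1))
  have hset : {v | v ≠ 0 ∧ β • v = v} = (W : Set (ι → K)) \ {0} := by
    ext v
    rw [Set.mem_sdiff, SetLike.mem_coe, mem_ker_toLin'_sub_one_iff, and_comm]
    rfl
  calc Nat.card {v : ι → K // v ≠ 0 ∧ β • v = v}
      _ = ((W : Set (ι → K)) \ {0}).ncard := by rw [← hset, ← Nat.card_coe_set_eq]; rfl
      _ = Nat.card W - 1 := by
        rw [Set.ncard_sdiff_singleton_of_mem W.zero_mem, ← Nat.card_coe_set_eq]; rfl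
      _ = _ := by rw [Module.natCard_eq_pow_finrank (K := K)]

end GeneralLinear

section Affine

variable {F : Type} [Field F] {n : ℕ}

theorem isAff_iff_mem_stabilizer (x : GL (Fin (n + 1)) F) :
    IsAff x ↔ x ∈ stabilizer (GL (Fin (n + 1)) F) (Pi.single 0 1 : Fin (n + 1) → F) := by
  rw [mem_stabilizer_iff, Units.smul_def, smul_eq_mulVec, mulVec_single_one, funext_iff]
  refine ⟨fun ⟨h0, h⟩ i => ?_,
    fun h => ⟨by simpa using h 0, fun j hj => by simpa [hj] using h j⟩⟩
  rcases eq_or_ne i 0 with rfl | hi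
  · simpa using h0
  · simpa [hi] using h i hi

theorem isAff_conj_iff (β g : GL (Fin (n + 1)) F) :
    IsAff (g * β * g⁻¹) ↔
      β • (g⁻¹ • Pi.single 0 1 : Fin (n + 1) → F) = g⁻¹ • Pi.single 0 1 := by
  rw [isAff_iff_mem_stabilizer, mem_stabilizer_iff, mul_smul, mul_smul, smul_eq_iff_eq_inv_smul]

theorem natCard_conj_isAff (β : GL (Fin (n + 1)) F) :
    Nat.card {g : GL (Fin (n + 1)) F // IsAff (g * β * g⁻¹)} =
      Nat.card {v : Fin (n + 1) → F // v ≠ 0 ∧ β • v = v} *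
        Nat.card {x : GL (Fin (n + 1)) F // IsAff x} := by
  set e₀ : Fin (n + 1) → F := Pi.single 0 1
  have he₀ : e₀ ≠ 0 := by simp [e₀]
  calc Nat.card {g : GL (Fin (n + 1)) F // IsAff (g * β * g⁻¹)}
      _ = Nat.card {g : GL (Fin (n + 1)) F // β • (g • e₀) = g • e₀} :=
        Nat.card_congr ((Equiv.inv _).subtypeEquiv fun g => isAff_conj_iff β g)
      _ = Nat.card {v // v ∈ orbit (GL (Fin (n + 1)) F) e₀ ∧ β • v = v} *
            Nat.card (stabilizer (GL (Fin (n + 1)) F) e₀) :=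
        natCard_smul_preimage e₀ fun v => β • v = v
      _ = _ := by
        rw [GeneralLinearGroup.orbit_eq_setOf_ne_zero he₀]
        congr 1
        exact Nat.card_congr (Equiv.subtypeEquivRight fun x => (isAff_iff_mem_stabilizer x).symm)

end Affine

/-- The number of elements of the affine group `A(n,q)` lying in the conjugacy class of
`β ∈ GL(n+1, F_q)` equals `|A(n,q)| ⬝ (q^f - 1) ⬝ |C| / |GL(n+1,q)|`, where `f` is the
dimension of the fixed space `ker (β - I)`.  (Stated multiplied through by `|GL(n+1,q)|`.) -/
theorem affine_conjClass_count (F : Type) [Field F] [Fintype F] (q : ℕ)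
    (hq : q = Fintype.card F) (n : ℕ) (β : GL (Fin (n + 1)) F) (f : ℕ)
    (hf : f = Module.finrank F (LinearMap.ker (Matrix.toLin' (β.val - 1)))) :
    Nat.card {x : GL (Fin (n + 1)) F // IsAff x ∧ IsConj β x} *
        Nat.card (GL (Fin (n + 1)) F) =
      Nat.card {x : GL (Fin (n + 1)) F // IsAff x} * (q ^ f - 1) *
        Nat.card {x : GL (Fin (n + 1)) F // IsConj β x} := by
  have hG : Nat.card (GL (Fin (n + 1)) F) =
      Nat.card {x // IsConj β x} * Nat.card (stabilizer (ConjAct (GL (Fin (n + 1)) F)) β) := by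
    simpa using natCard_conj_preimage β fun _ => True
  have hAff := natCard_conj_preimage β IsAff
  rw [natCard_conj_isAff, GeneralLinearGroup.natCard_nonzero_fixed, Nat.card_eq_fintype_card,
    ← hq, ← hf] at hAff
  rw [hG, mul_left_comm, ← hAff]
  ring
end

section
/- Fix real q > 1 and real u with 0 < u < 1. For a ≥ 1 set Q(a) = [∏_{r=1}^∞ (1 − u/q^r)] · u^{a−1} / (q^{a^2−a} (u/q)_a (1/q)_{a−1}), and for a ≥ b ≥ 0 set K(a,b) = u^b (1/q)_a (u/q)_a / (q^{b^2} (1/q)_{a−b} (1/q)_b (u/q)_b). Then for every partition λ of a positive integer, writing λ'_i for the column lengths of λ (with λ'_i = 0 for i > λ_1), one has N_{u,q}(λ) = Q(λ'_1) · ∏_{i=1}^{λ_1} K(λ'_i, λ'_{i+1}). In other words, the Markov chain started from λ'_1 = a with probability Q(a) and with transition probabilities K generates partitions distributed according to N_{u,q}. -/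
/-!
Write `a_i = λ'_i`, so that `a_i - a_{i+1} = m_i` and `a_{|λ|+1} = 0`. In `∏ K(a_i, a_{i+1})`
the factors `(1/q)_a (u/q)_a` telescope to `(1/q)_{a_1} (u/q)_{a_1}`, and the `q^{a_{i+1}²}`
make up `∏ q^{a_i²}` except for `q^{a_1²}`. Multiplying by `Q(a_1)`, what is left over is
`q^{a_1²} / q^{a_1² - a_1} ⬝ (1/q)_{a_1} / (1/q)_{a_1 - 1} = q^{a_1} - 1`, and
`u^{a_1 - 1} u^{∑ a_{i+1}} = u^{|λ| - 1}`.
-/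

/-- `(x/q)_i = ∏_{j=1}^i (1 - x/q^j)`. -/
noncomputable def poch (x q : ℝ) (i : ℕ) : ℝ := ∏ j ∈ Finset.Icc 1 i, (1 - x / q ^ j)

/-- The `i`-th column length `λ'_i` of the partition whose multiset of parts is `m`:
the number of parts of size at least `i` (so `λ'_i = 0` for `i > λ_1`). -/
def col (m : Multiset ℕ) (i : ℕ) : ℕ := (m.filter (fun p => i ≤ p)).card

/-- The measure `N_{u,q}` on partitions (a partition is encoded by its multiset of parts). -/
noncomputable def Nmeas (u q : ℝ) (m : Multiset ℕ) : ℝ :=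
  (∏' r : ℕ, (1 - u / q ^ (r + 1))) * u ^ (m.sum - 1) * (q ^ col m 1 - 1) /
    ∏ i ∈ Finset.Icc 1 m.sum, (q ^ ((col m i) ^ 2) * poch 1 q (m.count i))

/-- The initial distribution
`Q(a) = [∏_{r=1}^∞ (1 - u/q^r)] u^{a-1} / (q^{a²-a} (u/q)_a (1/q)_{a-1})`. -/
noncomputable def Qstart (u q : ℝ) (a : ℕ) : ℝ :=
  (∏' r : ℕ, (1 - u / q ^ (r + 1))) * u ^ (a - 1) /
    (q ^ (a ^ 2 - a) * poch u q a * poch 1 q (a - 1))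

/-- The transition probabilities
`K(a,b) = u^b (1/q)_a (u/q)_a / (q^{b²} (1/q)_{a-b} (1/q)_b (u/q)_b)`. -/
noncomputable def Ktrans (u q : ℝ) (a b : ℕ) : ℝ :=
  u ^ b * poch 1 q a * poch u q a /
    (q ^ (b ^ 2) * poch 1 q (a - b) * poch 1 q b * poch u q b)

open Finset

@[to_additive]
theorem Finset.prod_Icc_mul_eq_mul_prod_Icc_succ {M : Type*} [CommMonoid M] (f : ℕ → M)
    (n : ℕ) : (∏ i ∈ Icc 1 n, f i) * f (n + 1) = f 1 * ∏ i ∈ Icc 1 n, f (i + 1) := by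
  induction n with
  | zero => simp
  | succ k ih =>
    rw [prod_Icc_succ_top (by omega), prod_Icc_succ_top (by omega), ← mul_assoc, ih]

@[simp]
theorem poch_zero (x q : ℝ) : poch x q 0 = 1 := by simp [poch]

theorem poch_succ (x q : ℝ) (i : ℕ) : poch x q (i + 1) = poch x q i * (1 - x / q ^ (i + 1)) :=
  prod_Icc_succ_top (by omega) _

theorem poch_pos {x q : ℝ} (hq : 1 ≤ q) (hx : x < q) (i : ℕ) : 0 < poch x q i := by
  refine prod_pos fun j hj => ?_
  have hqj : q ≤ q ^ j := le_self_pow₀ hq (by simp at hj; omega)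
  have : x / q ^ j < 1 := (div_lt_one (by positivity)).mpr (by linarith)
  linarith

section Chain

variable {u q : ℝ}

theorem Qstart_mul_poch_mul_pow (hq : 1 < q) (hu : u < q) {a : ℕ} (ha : 1 ≤ a) :
    Qstart u q a * (poch 1 q a * poch u q a) * q ^ (a ^ 2) =
      (∏' r : ℕ, (1 - u / q ^ (r + 1))) * u ^ (a - 1) * (q ^ a - 1) := by
  obtain ⟨k, rfl⟩ := Nat.exists_eq_add_of_le' ha
  have hsq : q ^ ((k + 1) ^ 2) = q ^ ((k + 1) ^ 2 - (k + 1)) * q ^ (k + 1) := by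
    rw [← pow_add]
    congr 1
    have := Nat.le_self_pow two_ne_zero (k + 1)
    omega
  have hPu := (poch_pos hq.le hu (k + 1)).ne'
  have hP1 := (poch_pos hq.le hq k).ne'
  have : q ^ ((k + 1) ^ 2 - (k + 1)) ≠ 0 := by positivity
  have : q ^ (k + 1) ≠ 0 := by positivity
  rw [Qstart, poch_succ 1 q k, hsq, Nat.add_sub_cancel]
  field_simp

theorem Ktrans_mul (hq : 1 < q) (hu : u < q) (a b : ℕ) :
    Ktrans u q a b * (q ^ (b ^ 2) * poch 1 q (a - b)) * (poch 1 q b * poch u q b) =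
      u ^ b * (poch 1 q a * poch u q a) := by
  have := (poch_pos hq.le hq (a - b)).ne'
  have := (poch_pos hq.le hq b).ne'
  have := (poch_pos hq.le hu b).ne'
  have : q ^ (b ^ 2) ≠ 0 := by positivity
  rw [Ktrans]
  field_simp

theorem prod_Ktrans_mul (hq : 1 < q) (hu : u < q) (a : ℕ → ℕ) {n : ℕ} (ha : a (n + 1) = 0) :
    (∏ i ∈ Icc 1 n, Ktrans u q (a i) (a (i + 1))) *
        ∏ i ∈ Icc 1 n, (q ^ (a i ^ 2) * poch 1 q (a i - a (i + 1))) =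
      poch 1 q (a 1) * poch u q (a 1) * q ^ (a 1 ^ 2) * u ^ ∑ i ∈ Icc 1 n, a (i + 1) := by
  have hpoch : ∏ i ∈ Icc 1 n, (poch 1 q (a i) * poch u q (a i)) =
      poch 1 q (a 1) * poch u q (a 1) *
        ∏ i ∈ Icc 1 n, (poch 1 q (a (i + 1)) * poch u q (a (i + 1))) := by
    simpa [ha] using
      prod_Icc_mul_eq_mul_prod_Icc_succ (fun i => poch 1 q (a i) * poch u q (a i)) n
  have hsq : ∏ i ∈ Icc 1 n, q ^ (a i ^ 2) =
      q ^ (a 1 ^ 2) * ∏ i ∈ Icc 1 n, q ^ (a (i + 1) ^ 2) := by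
    have := prod_Icc_mul_eq_mul_prod_Icc_succ (fun i => q ^ (a i ^ 2)) n
    simp only [ha] at this
    simpa using this
  have hpoch_ne : ∏ i ∈ Icc 1 n, (poch 1 q (a (i + 1)) * poch u q (a (i + 1))) ≠ 0 :=
    prod_ne_zero_iff.mpr fun i _ => mul_ne_zero (poch_pos hq.le hq _).ne' (poch_pos hq.le hu _).ne'
  have hfactor := prod_congr rfl fun i (_ : i ∈ Icc 1 n) => Ktrans_mul hq hu (a i) (a (i + 1))
  rw [← mul_left_inj' hpoch_ne]
  simp only [prod_mul_distrib, prod_pow_eq_pow_sum] at hpoch hsq hfactor ⊢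
  rw [hsq]
  linear_combination
    q ^ (a 1 ^ 2) * hfactor + q ^ (a 1 ^ 2) * u ^ (∑ i ∈ Icc 1 n, a (i + 1)) * hpoch

end Chain

theorem col_cons (x : ℕ) (s : Multiset ℕ) (i : ℕ) :
    col (x ::ₘ s) i = col s i + if i ≤ x then 1 else 0 := by
  simp only [col, Multiset.filter_cons]
  split_ifs <;> simp [add_comm]

theorem col_eq_col_succ_add_count (m : Multiset ℕ) (i : ℕ) :
    col m i = col m (i + 1) + m.count i := by
  induction m using Multiset.induction with
  | empty => simp [col]
  | cons x s ih =>
    rw [col_cons, col_cons, Multiset.count_cons, ih]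
    split_ifs <;> omega

theorem col_eq_zero_of_sum_lt {m : Multiset ℕ} {i : ℕ} (h : m.sum < i) : col m i = 0 := by
  rw [col, Multiset.card_eq_zero, Multiset.filter_eq_nil]
  intro p hp
  have := Multiset.le_sum_of_mem hp
  omega

theorem sum_col_Icc (m : Multiset ℕ) {N : ℕ} (h : ∀ x ∈ m, x ≤ N) :
    ∑ i ∈ Icc 1 N, col m i = m.sum := by
  induction m using Multiset.induction with
  | empty => simp [col]
  | cons x s ih =>
    have hx : {i ∈ Icc 1 N | i ≤ x} = Icc 1 x := by
      ext i
      have := h x (Multiset.mem_cons_self x s)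
      simp only [mem_filter, mem_Icc]
      omega
    simp only [col_cons, Multiset.sum_cons, sum_add_distrib, sum_boole, hx,
      ih fun y hy => h y (Multiset.mem_cons_of_mem hy)]
    simp [add_comm]

theorem col_one_pos {m : Multiset ℕ} (hpos : ∀ x ∈ m, 0 < x) (hne : m ≠ 0) :
    0 < col m 1 := by
  obtain ⟨x, hx⟩ := Multiset.exists_mem_of_ne_zero hne
  exact Multiset.card_pos_iff_exists_mem.mpr ⟨x, Multiset.mem_filter.mpr ⟨hx, hpos x hx⟩⟩

/-- The product below runs over `1 ≤ i ≤ |λ|`, which includes all `i ≤ λ_1`; the extra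
factors are `K(0,0) = 1`. -/
theorem Nmeas_markov_chain_general (q u : ℝ) (hq : 1 < q) (hu1 : u < 1)
    (m : Multiset ℕ) (hpos : ∀ x ∈ m, 0 < x) (hne : m ≠ 0) :
    Nmeas u q m =
      Qstart u q (col m 1) *
        ∏ i ∈ Finset.Icc 1 m.sum, Ktrans u q (col m i) (col m (i + 1)) := by
  have hcol : 1 ≤ col m 1 := col_one_pos hpos hne
  have hend : col m (m.sum + 1) = 0 := col_eq_zero_of_sum_lt (Nat.lt_succ_self _)
  have hcount (i : ℕ) : m.count i = col m i - col m (i + 1) := by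
    have := col_eq_col_succ_add_count m i
    omega
  have hshift : col m 1 + ∑ i ∈ Icc 1 m.sum, col m (i + 1) = m.sum := by
    have := sum_Icc_add_eq_add_sum_Icc_succ (col m) m.sum
    rwa [hend, add_zero, sum_col_Icc m fun x hx => Multiset.le_sum_of_mem hx, eq_comm] at this
  have hexp : u ^ (col m 1 - 1) * u ^ ∑ i ∈ Icc 1 m.sum, col m (i + 1) = u ^ (m.sum - 1) := by
    rw [← pow_add]
    congr 1
    omega
  have hD : ∏ i ∈ Icc 1 m.sum, (q ^ (col m i ^ 2) * poch 1 q (col m i - col m (i + 1))) ≠ 0 :=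
    prod_ne_zero_iff.mpr fun i _ => mul_ne_zero (by positivity) (poch_pos hq.le hq _).ne'
  simp_rw [Nmeas, hcount, div_eq_iff hD, mul_assoc (Qstart _ _ _),
    prod_Ktrans_mul hq (hu1.trans hq) (col m) hend]
  rw [← hexp]
  linear_combination (-u ^ ∑ i ∈ Icc 1 m.sum, col m (i + 1)) *
    Qstart_mul_poch_mul_pow hq (hu1.trans hq) hcol

/-- The Markov chain with initial distribution `Q` and transition kernel `K` generates
partitions distributed according to `N_{u,q}`:  for every partition `λ` of a positive
integer, `N_{u,q}(λ) = Q(λ'_1) ⬝ ∏_{i≥1} K(λ'_i, λ'_{i+1})`.  (The product below runs over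
`1 ≤ i ≤ |λ|`, which includes all `i ≤ λ_1`; the extra factors are `K(0,0) = 1`.) -/
theorem Nmeas_markov_chain (q u : ℝ) (hq : 1 < q) (hu0 : 0 < u) (hu1 : u < 1)
    (m : Multiset ℕ) (hpos : ∀ x ∈ m, 0 < x) (hne : m ≠ 0) :
    Nmeas u q m =
      Qstart u q (col m 1) *
        ∏ i ∈ Finset.Icc 1 m.sum, Ktrans u q (col m i) (col m (i + 1)) :=
  Nmeas_markov_chain_general q u hq hu1 m hpos hne
end
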